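/- arXiv:2310.08831 — 3 statements merged into one kernel-verified Lean document; each statement's English description precedes it below -/
import Mathlib

section
/- Let S be a symmetric positive definite d×d real matrix such that every off-diagonal entry of S^{-1} is nonpositive, let Σ_E = diag(a_1,…,a_d) with a_j ≥ 0 for all j, and let Ω = (Σ_E + S)^{-1}. Let β_X ∈ R^d have all entries nonpositive. If a_j = 0 for some index j, then the j-th entry of the measurement error bias vector −Ω Σ_E β_X is nonpositive. -/
/-!
Adding the nonnegative diagonal `diag a` to `S` one entry at a time, the Sherman–Morrison
formula shows that the inverse keeps nonpositive off-diagonal entries: outside row and column `k`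
the rank-one correction subtracts a product of two nonpositive entries over the positive number
`1 + c (A⁻¹)ₖₖ`, and on row and column `k` it only rescales by that number. Then the `j`-th entry
of `Ω Σ_E βX` is `∑ₖ Ω_jk aₖ βXₖ`, whose `k = j` term vanishes as `a j = 0` and whose other terms
are products of `Ω_jk ≤ 0`, `aₖ ≥ 0` and `βXₖ ≤ 0`.
-/

open Matrix

namespace Matrix

variable {n : Type*}

def IsZMatrix {R : Type*} [Zero R] [LE R] (A : Matrix n n R) : Prop :=
  ∀ i j, i ≠ j → A i j ≤ 0

variable [Fintype n] [DecidableEq n]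

theorem inv_add_diagonal_single_apply {K : Type*} [Field K] {A : Matrix n n K} (hA : IsUnit A)
    {k : n} {c : K} (hc : 1 + c * A⁻¹ k k ≠ 0) (i j : n) :
    (A + diagonal (Pi.single k c))⁻¹ i j
      = A⁻¹ i j - c * A⁻¹ i k * A⁻¹ k j / (1 + c * A⁻¹ k k) := by
  set U := replicateCol Unit (Pi.single k c)
  set V := replicateRow Unit (Pi.single k (1 : K))
  have hrank_one : diagonal (Pi.single k c) = U * (1 : Matrix Unit Unit K) * V := by
    rw [Matrix.mul_one, ← vecMulVec_eq Unit]
    ext i j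
    simp only [vecMulVec_apply, diagonal_apply, Pi.single_apply]
    grind
  have hschur : 1⁻¹ + V * A⁻¹ * U = of fun _ _ => 1 + c * A⁻¹ k k := by
    ext
    simp [U, V, mul_apply, Pi.single_apply, mul_comm]
  have hschur_unit : IsUnit (1⁻¹ + V * A⁻¹ * U) := by
    rw [hschur, isUnit_iff_isUnit_det, det_unique]
    exact isUnit_iff_ne_zero.mpr hc
  rw [hrank_one, add_mul_mul_inv_eq_sub _ _ _ _ hA isUnit_one hschur_unit, hschur,
    inv_subsingleton (of _)]
  simp only [U, V, of_apply, Ring.inverse_eq_inv, sub_apply, mul_apply, Finset.univ_unique,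
    PUnit.default_eq_unit, replicateCol_apply, replicateRow_apply, Pi.single_apply, mul_ite,
    ite_mul, mul_zero, zero_mul, mul_one, Finset.sum_ite_eq', Finset.sum_ite_irrel,
    Finset.sum_const_zero, Finset.mem_univ, ↓reduceIte, diagonal_apply_eq, Finset.sum_const,
    Finset.card_singleton, one_smul, div_eq_mul_inv, sub_right_inj]
  ring

theorem IsZMatrix.mul_diagonal_mulVec_apply_nonneg {R : Type*} [Ring R] [PartialOrder R]
    [IsOrderedRing R] {M : Matrix n n R} (hM : M.IsZMatrix) {a β : n → R} (ha : 0 ≤ a)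
    (hβ : β ≤ 0) {j : n} (haj : a j = 0) : 0 ≤ ((M * diagonal a) *ᵥ β) j := by
  refine Finset.sum_nonneg fun k _ => ?_
  change 0 ≤ (M * diagonal a) j k * β k
  rw [mul_diagonal]
  rcases eq_or_ne k j with rfl | hkj
  · simp [haj]
  · exact mul_nonneg_of_nonpos_of_nonpos
      (mul_nonpos_of_nonpos_of_nonneg (hM j k hkj.symm) (ha k)) (hβ k)

theorem IsZMatrix.inv_add_diagonal_single {A : Matrix n n ℝ} (hA : A.PosDef)
    (hZ : A⁻¹.IsZMatrix) (k : n) {c : ℝ} (hc : 0 ≤ c) :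
    (A + diagonal (Pi.single k c))⁻¹.IsZMatrix := by
  set δ := 1 + c * A⁻¹ k k
  have hδ : 0 < δ := by
    have := hA.inv.diag_pos (i := k)
    positivity
  intro i j hij
  rw [inv_add_diagonal_single_apply hA.isUnit hδ.ne']
  rcases eq_or_ne i k with rfl | hik
  · have hrow : A⁻¹ i j - c * A⁻¹ i i * A⁻¹ i j / δ = A⁻¹ i j / δ := by
      field_simp
      ring
    rw [hrow]
    exact div_nonpos_of_nonpos_of_nonneg (hZ i j hij) hδ.le
  rcases eq_or_ne j k with rfl | hjk
  · have hcol : A⁻¹ i j - c * A⁻¹ i j * A⁻¹ j j / δ = A⁻¹ i j / δ := by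
      field_simp
      ring
    rw [hcol]
    exact div_nonpos_of_nonpos_of_nonneg (hZ i j hij) hδ.le
  have hcorr : 0 ≤ c * A⁻¹ i k * A⁻¹ k j / δ := by
    have := mul_nonneg_of_nonpos_of_nonpos (hZ i k hik) (hZ k j hjk.symm)
    rw [mul_assoc]
    positivity
  linarith [hZ i j hij]

theorem PosDef.inv_add_diagonal_isZMatrix {A : Matrix n n ℝ} (hA : A.PosDef)
    (hZ : A⁻¹.IsZMatrix) {a : n → ℝ} (ha : 0 ≤ a) : (A + diagonal a)⁻¹.IsZMatrix := by
  suffices ∀ s : Finset n, (A + diagonal (∑ k ∈ s, Pi.single k (a k))).PosDef ∧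
      (A + diagonal (∑ k ∈ s, Pi.single k (a k)))⁻¹.IsZMatrix by
    simpa only [Finset.univ_sum_single] using (this Finset.univ).2
  intro s
  induction s using Finset.induction_on with
  | empty => simpa using ⟨hA, hZ⟩
  | insert k s hk ih =>
    rw [Finset.sum_insert hk, Pi.add_def, ← diagonal_add, add_comm (diagonal _), ← add_assoc]
    have hsingle : (diagonal (Pi.single k (a k))).PosSemidef :=
      posSemidef_diagonal_iff.mpr (Pi.single_nonneg (α := fun _ => ℝ) |>.mpr (ha k))
    exact ⟨ih.1.add_posSemidef hsingle, ih.2.inv_add_diagonal_single ih.1 k (ha k)⟩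

end Matrix

/-- Perfectly measured pollutants have nonpositive measurement
error bias: if `S` is symmetric positive definite with nonpositive off-diagonal
entries of `S⁻¹`, `Σ_E = diagonal a` with `a ≥ 0`, `βX ≤ 0` entrywise, and
`a j = 0`, then the `j`-th entry of `-Ω Σ_E βX` (with `Ω = (Σ_E + S)⁻¹`) is
nonpositive. -/
theorem perfectly_measured_bias_nonpos
    (d : ℕ) (S : Matrix (Fin d) (Fin d) ℝ) (hS : S.PosDef)
    (hSinv : ∀ j j' : Fin d, j ≠ j' → S⁻¹ j j' ≤ 0)
    (a : Fin d → ℝ) (ha : ∀ j, 0 ≤ a j)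
    (βX : Fin d → ℝ) (hβX : ∀ j, βX j ≤ 0)
    (j : Fin d) (haj : a j = 0) :
    (-(((Matrix.diagonal a + S)⁻¹ * Matrix.diagonal a).mulVec βX)) j ≤ 0 := by
  have hΩ : (diagonal a + S)⁻¹.IsZMatrix :=
    add_comm S (diagonal a) ▸ hS.inv_add_diagonal_isZMatrix hSinv ha
  simpa using hΩ.mul_diagonal_mulVec_apply_nonneg ha hβX haj
end

section
/- Let A be a p×p real matrix, B, C real p×d matrices, and F, G real d×d matrices, such that the (p+d)×(p+d) block matrix Σ_M with blocks A, C (upper-right), C^T (lower-left), and G (lower-right) is symmetric positive definite. Then G and A − C G^{-1} C^T are invertible, and for every β_Z ∈ R^p and β_X ∈ R^d, the first p entries of the vector Σ_M^{-1} · Σ_{M,E} · (β_Z, β_X), where Σ_{M,E} is the (p+d)×(p+d) block matrix with upper-left p×p block zero, upper-right block B − C, lower-left block zero, and lower-right block F^T − G, equal (A − C G^{-1} C^T)^{-1} (B − C G^{-1} F^T) β_X. -/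
/-!
Regressing on the proxies amounts to solving `Σ_M b = Σ_{M,E} β`, and the `Z`-block of
`Σ_M⁻¹` is read off the block-inverse formula with respect to the Schur complement
`S = A - C G⁻¹ Cᵀ` of `G`: the top block of `Σ_M⁻¹ (u, v)` is `S⁻¹ (u - C G⁻¹ v)`.
With `u = (B - C) βX` and `v = (Fᵀ - G) βX` the two `C βX` terms cancel. Positive
definiteness of `Σ_M` makes `G`, a principal block, positive definite, and then `S`
is invertible because `Σ_M` is.
-/

open Matrix

namespace Matrix

theorem PosDef.toBlocks₂₂ {m n R : Type*} [Ring R] [PartialOrder R] [StarRing R]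
    {M : Matrix (m ⊕ n) (m ⊕ n) R} (hM : M.PosDef) : M.toBlocks₂₂.PosDef :=
  hM.submatrix Sum.inr_injective

section Schur

variable {m n α : Type*} [Fintype m] [Fintype n] [DecidableEq m] [DecidableEq n] [CommRing α]
  {A : Matrix m m α} {B : Matrix m n α} {C : Matrix n m α} {D : Matrix n n α}

theorem isUnit_fromBlocks_iff_of_isUnit₂₂ (hD : IsUnit D) :
    IsUnit (fromBlocks A B C D) ↔ IsUnit (A - B * D⁻¹ * C) := by
  let := hD.invertible
  rw [← invOf_eq_nonsing_inv, isUnit_fromBlocks_iff_of_invertible₂₂]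

theorem inv_fromBlocks₂₂_of_isUnit (hD : IsUnit D) (hS : IsUnit (A - B * D⁻¹ * C)) :
    (fromBlocks A B C D)⁻¹ =
      fromBlocks (A - B * D⁻¹ * C)⁻¹ (-((A - B * D⁻¹ * C)⁻¹ * B * D⁻¹))
        (-(D⁻¹ * C * (A - B * D⁻¹ * C)⁻¹))
        (D⁻¹ + D⁻¹ * C * (A - B * D⁻¹ * C)⁻¹ * B * D⁻¹) := by
  let := hD.invertible
  rw [← invOf_eq_nonsing_inv D] at hS ⊢
  let := hS.invertible
  let := fromBlocks₂₂Invertible A B C D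
  rw [← invOf_eq_nonsing_inv, invOf_fromBlocks₂₂_eq, invOf_eq_nonsing_inv]

theorem inv_fromBlocks₂₂_mulVec_inl (hD : IsUnit D) (hS : IsUnit (A - B * D⁻¹ * C))
    (u : m → α) (v : n → α) (i : m) :
    ((fromBlocks A B C D)⁻¹ *ᵥ Sum.elim u v) (Sum.inl i) =
      ((A - B * D⁻¹ * C)⁻¹ *ᵥ (u - B *ᵥ D⁻¹ *ᵥ v)) i := by
  rw [inv_fromBlocks₂₂_of_isUnit hD hS, fromBlocks_mulVec]
  simp only [Sum.elim_inl, Sum.elim_comp_inl, Sum.elim_comp_inr, neg_mulVec, ← mulVec_mulVec]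
  rw [mulVec_sub, ← sub_eq_add_neg]

end Schur

end Matrix

/-- General measurement error bias formula for the coefficients
of the perfectly measured covariates: if `Σ_M = [[A, C], [Cᵀ, G]]` is symmetric
positive definite, then `G` and `A - C G⁻¹ Cᵀ` are invertible, and the first `p`
entries of `Σ_M⁻¹ Σ_{M,E} β` (with `Σ_{M,E}` the block matrix with blocks
`0, B - C, 0, Fᵀ - G`) equal `(A - C G⁻¹ Cᵀ)⁻¹ (B - C G⁻¹ Fᵀ) βX`. -/
theorem measurement_error_bias_Z_closed_form
    (p d : ℕ) (A : Matrix (Fin p) (Fin p) ℝ)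
    (B C : Matrix (Fin p) (Fin d) ℝ) (F G : Matrix (Fin d) (Fin d) ℝ)
    (hSM : (Matrix.fromBlocks A C Cᵀ G).PosDef) :
    IsUnit G ∧ IsUnit (A - C * G⁻¹ * Cᵀ) ∧
    ∀ (βZ : Fin p → ℝ) (βX : Fin d → ℝ) (k : Fin p),
      ((Matrix.fromBlocks A C Cᵀ G)⁻¹).mulVec
          ((Matrix.fromBlocks (0 : Matrix (Fin p) (Fin p) ℝ) (B - C)
              (0 : Matrix (Fin d) (Fin p) ℝ) (Fᵀ - G)).mulVec
            (Sum.elim βZ βX)) (Sum.inl k)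
        = ((A - C * G⁻¹ * Cᵀ)⁻¹ * (B - C * G⁻¹ * Fᵀ)).mulVec βX k := by
  have hG : IsUnit G := by simpa using hSM.toBlocks₂₂.isUnit
  have hS : IsUnit (A - C * G⁻¹ * Cᵀ) := (isUnit_fromBlocks_iff_of_isUnit₂₂ hG).mp hSM.isUnit
  refine ⟨hG, hS, fun βZ βX k => ?_⟩
  have hGG : G⁻¹ * G = 1 := nonsing_inv_mul G ((isUnit_iff_isUnit_det G).mp hG)
  have cancel : (B - C) *ᵥ βX - C *ᵥ G⁻¹ *ᵥ (Fᵀ - G) *ᵥ βX = (B - C * G⁻¹ * Fᵀ) *ᵥ βX := by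
    simp only [mulVec_mulVec, ← sub_mulVec, Matrix.mul_sub, Matrix.mul_assoc, hGG, Matrix.mul_one]
    abel_nf
  rw [fromBlocks_mulVec]
  simp only [Sum.elim_comp_inl, Sum.elim_comp_inr, zero_mulVec, zero_add]
  rw [inv_fromBlocks₂₂_mulVec_inl hG hS, cancel, mulVec_mulVec]
end

section
/- Let p = d = 1 and let σ_Z, σ_X > 0, β_X ∈ R, and correlations ρ_ZX, ρ_ZW, ρ_XW ∈ [−1, 1] satisfy: ρ_XW > |ρ_ZW| > 0, |ρ_ZX| ≥ |ρ_ZW|, and ρ_ZW and ρ_ZX have the same sign. Define the measurement error bias MEB = β_X σ_X (ρ_ZX − ρ_ZW ρ_XW) / (σ_Z (1 − ρ_ZW²)) and the omitted variable bias OVB = β_X σ_X ρ_ZX / σ_Z. Then MEB and OVB have the same sign, |MEB| ≤ |OVB|, and |MEB| = |OVB| if and only if OVB = 0. -/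
/-! Both biases are proportional: `MEB = OVB · t` with the attenuation factor
`t = (ρZX - ρZW ρXW) / (ρZX (1 - ρZW²))`. Since `ρZW ρZX > 0`, `|ρZW| ≤ |ρZX|` and
`ρZW ρZX ≤ |ρZW| < ρXW ≤ 1`, this factor lies in `[0, 1)`, and every claim follows. -/

theorem sign_and_abs_of_eq_mul_of_mem_Ico {a b t : ℝ} (h : b = a * t) (ht : t ∈ Set.Ico 0 1) :
    (0 ≤ a → 0 ≤ b) ∧ (a ≤ 0 → b ≤ 0) ∧ |b| ≤ |a| ∧ (|b| = |a| ↔ a = 0) := by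
  obtain ⟨ht0, ht1⟩ := ht
  subst h
  have habs : |a * t| = |a| * t := by rw [abs_mul, abs_of_nonneg ht0]
  refine ⟨fun ha => mul_nonneg ha ht0, fun ha => mul_nonpos_of_nonpos_of_nonneg ha ht0, ?_, ?_⟩
  · rw [habs]
    exact mul_le_of_le_one_right (abs_nonneg a) ht1.le
  · rw [habs]
    constructor
    · intro h
      have : |a| * (1 - t) = 0 := by linarith
      simpa [sub_ne_zero.mpr ht1.ne'] using this
    · rintro rfl
      simp

/-- The ratio `MEB / OVB`, with numerator and denominator multiplied by `ρZX` so that the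
denominator is visibly nonnegative. -/
noncomputable def attenuation (ρZX ρZW ρXW : ℝ) : ℝ :=
  ρZX * (ρZX - ρZW * ρXW) / (ρZX ^ 2 * (1 - ρZW ^ 2))

theorem meb_eq_ovb_mul_attenuation (σZ σX βX ρZX ρZW ρXW : ℝ) (hZX : ρZX ≠ 0) :
    βX * σX * (ρZX - ρZW * ρXW) / (σZ * (1 - ρZW ^ 2)) =
      βX * σX * ρZX / σZ * attenuation ρZX ρZW ρXW := by
  rw [attenuation, div_mul_div_comm, ← mul_div_mul_left _ _ (pow_ne_zero 2 hZX)]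
  ring

theorem attenuation_nonneg {ρZX ρZW ρXW : ℝ} (hsign : 0 ≤ ρZW * ρZX) (hle : |ρZW| ≤ |ρZX|)
    (hZW : |ρZW| ≤ 1) (hXW : ρXW ≤ 1) : 0 ≤ attenuation ρZX ρZW ρXW := by
  have hprod : ρZW * ρZX ≤ ρZX ^ 2 := by
    calc ρZW * ρZX ≤ |ρZW| * |ρZX| := by rw [← abs_mul]; exact le_abs_self _
      _ ≤ |ρZX| * |ρZX| := by gcongr
      _ = ρZX ^ 2 := by rw [← sq, sq_abs]
  have hnum : 0 ≤ ρZX * (ρZX - ρZW * ρXW) := by nlinarith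
  have hden : 0 ≤ 1 - ρZW ^ 2 := sub_nonneg.mpr (sq_le_one_iff_abs_le_one ρZW |>.mpr hZW)
  exact div_nonneg hnum (by positivity)

theorem attenuation_lt_one {ρZX ρZW ρXW : ℝ} (hsign : 0 < ρZW * ρZX) (hlt : ρZW * ρZX < ρXW)
    (hZW : |ρZW| < 1) : attenuation ρZX ρZW ρXW < 1 := by
  have hZX : ρZX ≠ 0 := by rintro rfl; simp at hsign
  have hden : 0 < ρZX ^ 2 * (1 - ρZW ^ 2) :=
    mul_pos (by positivity) (sub_pos.mpr (sq_lt_one_iff_abs_lt_one ρZW |>.mpr hZW))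
  rw [attenuation, div_lt_one hden]
  nlinarith

theorem meb_vs_ovb_scalar_case_general
    (σZ σX βX ρZX ρZW ρXW : ℝ)
    (hρZX : ρZX ∈ Set.Icc (-1 : ℝ) 1)
    (hρXW : ρXW ∈ Set.Icc (-1 : ℝ) 1)
    (h1 : |ρZW| < ρXW) (h3 : |ρZW| ≤ |ρZX|)
    (hsign : 0 < ρZW * ρZX)
    (MEB OVB : ℝ)
    (hMEB : MEB = βX * σX * (ρZX - ρZW * ρXW) / (σZ * (1 - ρZW ^ 2)))
    (hOVB : OVB = βX * σX * ρZX / σZ) :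
    (0 ≤ OVB → 0 ≤ MEB) ∧ (OVB ≤ 0 → MEB ≤ 0) ∧
    |MEB| ≤ |OVB| ∧ (|MEB| = |OVB| ↔ OVB = 0) := by
  have hZW : |ρZW| < 1 := h1.trans_le hρXW.2
  have hlt : ρZW * ρZX < ρXW :=
    calc ρZW * ρZX ≤ |ρZW| * |ρZX| := by rw [← abs_mul]; exact le_abs_self _
      _ ≤ |ρZW| := mul_le_of_le_one_right (abs_nonneg _) (abs_le.mpr hρZX)
      _ < ρXW := h1
  have hZX : ρZX ≠ 0 := by rintro rfl; simp at hsign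
  refine sign_and_abs_of_eq_mul_of_mem_Ico (t := attenuation ρZX ρZW ρXW) ?_
    ⟨attenuation_nonneg hsign.le h3 hZW.le hρXW.2, attenuation_lt_one hsign hlt hZW⟩
  rw [hMEB, hOVB, meb_eq_ovb_mul_attenuation σZ σX βX ρZX ρZW ρXW hZX]

/-- Case `p = d = 1`: under `ρ_XW > |ρ_ZW| > 0`,
`|ρ_ZX| ≥ |ρ_ZW|`, and `ρ_ZW, ρ_ZX` of the same sign, the measurement error
bias `MEB = βX σX (ρZX - ρZW ρXW) / (σZ (1 - ρZW²))` and the omitted variable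
bias `OVB = βX σX ρZX / σZ` have the same sign, `|MEB| ≤ |OVB|`, with equality
if and only if `OVB = 0`. -/
theorem meb_vs_ovb_scalar_case
    (σZ σX βX ρZX ρZW ρXW : ℝ)
    (hσZ : 0 < σZ) (hσX : 0 < σX)
    (hρZX : ρZX ∈ Set.Icc (-1 : ℝ) 1)
    (hρZW : ρZW ∈ Set.Icc (-1 : ℝ) 1)
    (hρXW : ρXW ∈ Set.Icc (-1 : ℝ) 1)
    (h1 : |ρZW| < ρXW) (h2 : 0 < |ρZW|) (h3 : |ρZW| ≤ |ρZX|)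
    (hsign : 0 < ρZW * ρZX)
    (MEB OVB : ℝ)
    (hMEB : MEB = βX * σX * (ρZX - ρZW * ρXW) / (σZ * (1 - ρZW ^ 2)))
    (hOVB : OVB = βX * σX * ρZX / σZ) :
    (0 ≤ OVB → 0 ≤ MEB) ∧ (OVB ≤ 0 → MEB ≤ 0) ∧
    |MEB| ≤ |OVB| ∧ (|MEB| = |OVB| ↔ OVB = 0) :=
  meb_vs_ovb_scalar_case_general σZ σX βX ρZX ρZW ρXW hρZX hρXW h1 h3 hsign MEB OVB hMEB hOVB
end
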